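/- arXiv:1307.5377 — 2 statements merged into one kernel-verified Lean document; each statement's English description precedes it below -/
import Mathlib

section
/- Let (A,λ,L) and (A',λ',L) be Pom_L-bisimilar labelled asynchronous systems. Then for every word w = a₁⋯a_k ∈ E* with k ≥ 0 such that s₀·w is defined, there exists a word w' = a₁'⋯a_k' ∈ E'* of the same length such that s₀'·w' is defined and the labelled asynchronous systems (A(s₀·w),λ,L) and (A'(s₀'·w'),λ',L) are Pom_L-bisimilar. -/
/-- An asynchronous (transition) system: a state space with an initial state,
in which every event occurs in at least one transition. -/
structure AsyncSystem (S E : Type) where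
  init : S
  indep : E → E → Prop
  tran : S → E → S → Prop
  indep_symm : ∀ a b, indep a b → indep b a
  indep_irrefl : ∀ a, ¬ indep a a
  det : ∀ s a s' s'', tran s a s' → tran s a s'' → s' = s''
  diamond : ∀ a b s s' s'', indep a b → tran s a s' → tran s' b s'' →
    ∃ s₁, tran s b s₁ ∧ tran s₁ a s''
  event_occurs : ∀ e, ∃ s₁ s₂, tran s₁ e s₂

/-- A state is reachable if there is a finite sequence of transitions from the
initial state to it. -/
def AsyncSystem.Reachable {S E : Type} (A : AsyncSystem S E) (s : S) : Prop :=
  Relation.ReflTransGen (fun x y => ∃ e, A.tran x e y) A.init s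

/-- `A.rebase s` is the asynchronous system `A(s)`: `A` with initial state replaced by `s`. -/
def AsyncSystem.rebase {S E : Type} (A : AsyncSystem S E) (s : S) : AsyncSystem S E :=
  { A with init := s }

/-- `A.Exec s w t` means `s · w = t`: the word `w` can be executed from `s`, ending in `t`. -/
def AsyncSystem.Exec {S E : Type} (A : AsyncSystem S E) : S → List E → S → Prop
  | s, [], t => s = t
  | s, e :: w, t => ∃ u, A.tran s e u ∧ A.Exec u w t

/-- A morphism of asynchronous systems with a total event map `η`. -/
def IsMorphism {S E S' E' : Type} (A : AsyncSystem S E) (A' : AsyncSystem S' E')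
    (σ : S → S') (η : E → E') : Prop :=
  σ A.init = A'.init ∧
  (∀ s₁ e s₂, A.tran s₁ e s₂ → A'.tran (σ s₁) (η e) (σ s₂)) ∧
  (∀ e₁ e₂, A.indep e₁ e₂ → A'.indep (η e₁) (η e₂))

/-- An open morphism of asynchronous systems (its event map is total). -/
def IsOpenMorphism {S E S' E' : Type} (A : AsyncSystem S E) (A' : AsyncSystem S' E')
    (σ : S → S') (η : E → E') : Prop :=
  IsMorphism A A' σ η ∧
  (∀ s e' u', A'.tran (σ s) e' u' → ∃ e u, A.tran s e u ∧ η e = e' ∧ σ u = u') ∧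
  (∀ s, A.Reachable s → ∀ e₁ e₂ u v, A.tran s e₁ u → A.tran u e₂ v →
    A'.indep (η e₁) (η e₂) → A.indep e₁ e₂)

/-- A `Pom_L`-open morphism of labelled asynchronous systems: an open morphism
preserving labels. -/
def IsPomOpen {S E S' E' L : Type} (A : AsyncSystem S E) (lab : E → L)
    (A' : AsyncSystem S' E') (lab' : E' → L) (σ : S → S') (η : E → E') : Prop :=
  IsOpenMorphism A A' σ η ∧ ∀ e, lab' (η e) = lab e

/-- Two labelled asynchronous systems are `Pom_L`-bisimilar if there is a third labelled
asynchronous system with `Pom_L`-open morphisms to each of them. -/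
def Bisimilar {S E S' E' L : Type} (A : AsyncSystem S E) (lab : E → L)
    (A' : AsyncSystem S' E') (lab' : E' → L) : Prop :=
  ∃ (S'' E'' : Type) (A'' : AsyncSystem S'' E'') (lab'' : E'' → L)
    (σ : S'' → S) (η : E'' → E) (σ' : S'' → S') (η' : E'' → E'),
    IsPomOpen A'' lab'' A lab σ η ∧ IsPomOpen A'' lab'' A' lab' σ' η'

/-- `Qn A n`: pairs of a reachable state `s` and an `n`-tuple of pairwise independent
events executable from `s`.  For `n = 0` this is the set of reachable states. -/
def Qn {S E : Type} (A : AsyncSystem S E) (n : ℕ) : Set (S × (Fin n → E)) :=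
  {p | A.Reachable p.1 ∧ (∃ t, A.Exec p.1 (List.ofFn p.2) t) ∧
    ∀ i j : Fin n, i < j → A.indep (p.2 i) (p.2 j)}

/-- The vertex set `λ⁺E` of the simplicial scheme of a labelled asynchronous system. -/
def VertexSet {S E L : Type} (A : AsyncSystem S E) (lab : E → L) : Set L :=
  {l | ∃ (a : E) (s u : S), A.Reachable s ∧ A.tran s a u ∧ lab a = l}

/-- The simplices of the simplicial scheme of a labelled asynchronous system:
finite nonempty sets `{λ(a₁), …, λ(a_k)}` (`k ≥ 1`) where the `aᵢ` are pairwise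
independent and `s · a₁ ⋯ a_k` is defined for some reachable state `s`. -/
def Simplices {S E L : Type} (A : AsyncSystem S E) (lab : E → L) : Set (Set L) :=
  {X | ∃ (k : ℕ) (a : Fin (k + 1) → E) (s : S),
    A.Reachable s ∧
    (∀ i j, i < j → A.indep (a i) (a j)) ∧
    (∃ t, A.Exec s (List.ofFn a) t) ∧
    X = Set.range fun i => lab (a i)}

/-
Lift the execution of `w` along the open morphism from the common cover `A''` of `A` and `A'`,
then push the lifted word down to `A'`.  Open morphisms stay open when both systems are rebased
at corresponding reachable states, so the common cover rebased at the end of the lifted word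
witnesses the bisimilarity of the two rebased systems.
-/

namespace AsyncSystem

variable {S E : Type} {A : AsyncSystem S E}

theorem Exec.reflTransGen :
    ∀ {w : List E} {s t : S}, A.Exec s w t →
      Relation.ReflTransGen (fun x y => ∃ e, A.tran x e y) s t
  | [], _, _, h => h ▸ .refl
  | e :: _, _, _, ⟨_, he, h⟩ => .head ⟨e, he⟩ h.reflTransGen

theorem Exec.reachable {w : List E} {t : S} (h : A.Exec A.init w t) : A.Reachable t :=
  h.reflTransGen

theorem Reachable.of_rebase {s t : S} (hs : A.Reachable s) (ht : (A.rebase s).Reachable t) :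
    A.Reachable t :=
  hs.trans ht

end AsyncSystem

section Morphisms

variable {S E S' E' : Type} {A : AsyncSystem S E} {A' : AsyncSystem S' E'}
  {σ : S → S'} {η : E → E'}

theorem IsMorphism.exec_map (h : IsMorphism A A' σ η) :
    ∀ {w : List E} {s t : S}, A.Exec s w t → A'.Exec (σ s) (w.map η) (σ t)
  | [], _, _, hst => congrArg σ hst
  | e :: _, s, _, ⟨u, he, hut⟩ => ⟨σ u, h.2.1 s e u he, h.exec_map hut⟩

theorem IsOpenMorphism.exists_exec_of_exec (h : IsOpenMorphism A A' σ η) :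
    ∀ {w' : List E'} {s : S} {t' : S'}, A'.Exec (σ s) w' t' →
      ∃ w t, A.Exec s w t ∧ w.map η = w' ∧ σ t = t'
  | [], s, _, hst => ⟨[], s, rfl, rfl, hst⟩
  | e' :: _, s, _, ⟨u', he', hut⟩ => by
    obtain ⟨e, u, he, rfl, rfl⟩ := h.2.1 s e' u' he'
    obtain ⟨w, t, hw, rfl, rfl⟩ := h.exists_exec_of_exec hut
    exact ⟨e :: w, t, ⟨u, he, hw⟩, rfl, rfl⟩

theorem IsPomOpen.rebase {L : Type} {lab : E → L} {lab' : E' → L}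
    (h : IsPomOpen A lab A' lab' σ η) {s : S} (hs : A.Reachable s) :
    IsPomOpen (A.rebase s) lab (A'.rebase (σ s)) lab' σ η := by
  obtain ⟨⟨⟨-, htran, hindep⟩, hlift, hreflect⟩, hlab⟩ := h
  exact ⟨⟨⟨rfl, htran, hindep⟩, hlift, fun x hx => hreflect x (hs.of_rebase hx)⟩, hlab⟩

end Morphisms

/-- if `(A, λ, L)` and `(A', λ', L)` are `Pom_L`-bisimilar, then for every
word `w = a₁ ⋯ a_k` with `s₀ · w` defined there is a word `w' = a₁' ⋯ a_k'` of the same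
length with `s₀' · w'` defined such that `(A(s₀ · w), λ, L)` and `(A'(s₀' · w'), λ', L)`
are `Pom_L`-bisimilar. -/
theorem bisimilar_word {S E S' E' L : Type}
    (A : AsyncSystem S E) (lab : E → L) (A' : AsyncSystem S' E') (lab' : E' → L)
    (h : Bisimilar A lab A' lab')
    (w : List E) (t : S) (hw : A.Exec A.init w t) :
    ∃ (w' : List E') (t' : S'), w'.length = w.length ∧ A'.Exec A'.init w' t' ∧
      Bisimilar (A.rebase t) lab (A'.rebase t') lab' := by
  obtain ⟨S'', E'', A'', lab'', σ, η, σ', η', hσ, hσ'⟩ := h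
  rw [← hσ.1.1.1] at hw
  obtain ⟨w'', t'', hw'', rfl, rfl⟩ := hσ.1.exists_exec_of_exec hw
  have hpush : A'.Exec A'.init (w''.map η') (σ' t'') := hσ'.1.1.1 ▸ hσ'.1.1.exec_map hw''
  have ht'' : A''.Reachable t'' := hw''.reachable
  exact ⟨w''.map η', σ' t'', by simp only [List.length_map], hpush,
    S'', E'', A''.rebase t'', lab'', σ, η, σ', η', hσ.rebase ht'', hσ'.rebase ht''⟩
end

section
/- If (σ,η): A → A' is an open morphism of asynchronous systems, then for every reachable state s ∈ S and every n ≥ 0, the induced map Q_n(A(s)) → Q_n(A'(σ(s))), given by (t,e₁,…,e_n) ↦ (σ(t),η(e₁),…,η(e_n)), is surjective. -/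
/-! Openness lets one lift transitions of `A'` out of any state of `A` with a prescribed image.
Lifting step by step first a path from `σ s` to the base state of a tuple of `Q_n(A'(σ s))`
and then the execution of its events gives a preimage, up to pairwise independence of the lifted
events; that is reflected by condition (3) of openness. -/

namespace AsyncSystem

variable {S E : Type}

theorem exec_rebase (A : AsyncSystem S E) (s : S) {u t : S} {w : List E} :
    (A.rebase s).Exec u w t ↔ A.Exec u w t := by
  induction w generalizing u with
  | nil => rfl
  | cons e w ih => exact exists_congr fun _ => and_congr .rfl ih

end AsyncSystem

theorem List.exists_ofFn_eq_of_map_eq_ofFn {α β : Type*} {n : ℕ} {g : α → β} {w : List α}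
    {f : Fin n → β} (h : w.map g = List.ofFn f) :
    ∃ e : Fin n → α, List.ofFn e = w ∧ g ∘ e = f := by
  have hlen : w.length = n := by simpa using congrArg List.length h
  subst hlen
  refine ⟨fun i => w[(i : ℕ)], List.ofFn_getElem, List.ofFn_injective ?_⟩
  rw [← List.map_ofFn, List.ofFn_getElem, h]

namespace IsOpenMorphism

variable {S E S' E' : Type} {A : AsyncSystem S E} {A' : AsyncSystem S' E'}
  {σ : S → S'} {η : E → E'}

theorem exists_lift_reflTransGen (hopen : IsOpenMorphism A A' σ η) {s : S} {t' : S'}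
    (h : Relation.ReflTransGen (fun x y => ∃ e, A'.tran x e y) (σ s) t') :
    ∃ t, Relation.ReflTransGen (fun x y => ∃ e, A.tran x e y) s t ∧ σ t = t' := by
  induction h with
  | refl => exact ⟨s, .refl, rfl⟩
  | tail _ hstep ih =>
    obtain ⟨u, hsu, rfl⟩ := ih
    obtain ⟨e', he'⟩ := hstep
    obtain ⟨e, t, het, -, hσt⟩ := hopen.2.1 u e' _ he'
    exact ⟨t, hsu.tail ⟨e, het⟩, hσt⟩

theorem exists_lift_exec (hopen : IsOpenMorphism A A' σ η) {w' : List E'} {u : S} {t' : S'}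
    (h : A'.Exec (σ u) w' t') :
    ∃ w t, A.Exec u w t ∧ w.map η = w' ∧ σ t = t' := by
  induction w' generalizing u with
  | nil => exact ⟨[], u, rfl, rfl, h⟩
  | cons e' w' ih =>
    obtain ⟨u', hu', hexec⟩ := h
    obtain ⟨e, v, huv, rfl, rfl⟩ := hopen.2.1 u e' u' hu'
    obtain ⟨w, t, hvt, rfl, hσt⟩ := ih hexec
    exact ⟨e :: w, t, ⟨v, huv, hvt⟩, rfl, hσt⟩

/-- The diamond property moves `e` past each event of `w` while staying in reachable states,
so that condition (3) of openness applies at every position. -/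
theorem indep_of_exec_cons (hopen : IsOpenMorphism A A' σ η) {e : E} {w : List E} {u v : S}
    (hu : A.Reachable u) (hexec : A.Exec u (e :: w) v)
    (hindep : ∀ f ∈ w, A'.indep (η e) (η f)) : ∀ f ∈ w, A.indep e f := by
  induction w generalizing u with
  | nil => simp
  | cons g w ih =>
    obtain ⟨u₁, he, u₂, hg, hw⟩ := hexec
    have heg : A.indep e g := hopen.2.2 u hu e g u₁ u₂ he hg (hindep g List.mem_cons_self)
    obtain ⟨x, hux, hxu₂⟩ := A.diamond e g u u₁ u₂ heg he hg
    rintro f (_ | ⟨_, hf⟩)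
    · exact heg
    · exact ih (hu.tail ⟨g, hux⟩) ⟨u₂, hxu₂, hw⟩
        (fun f hf => hindep f (List.mem_cons_of_mem g hf)) f hf

theorem pairwise_indep_of_exec (hopen : IsOpenMorphism A A' σ η) {w : List E} {u v : S}
    (hu : A.Reachable u) (hexec : A.Exec u w v) (hpw : (w.map η).Pairwise A'.indep) :
    w.Pairwise A.indep := by
  induction w generalizing u with
  | nil => exact .nil
  | cons e w ih =>
    obtain ⟨u₁, he, hw⟩ := hexec
    rw [List.map_cons, List.pairwise_cons, List.forall_mem_map] at hpw
    exact .cons (hopen.indep_of_exec_cons hu ⟨u₁, he, hw⟩ hpw.1)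
      (ih (hu.tail ⟨e, he⟩) hw hpw.2)

end IsOpenMorphism

/-- for an open morphism `(σ, η) : A → A'` and every reachable state `s`
of `A`, the induced maps `Q_n(A(s)) → Q_n(A'(σ s))` are surjective for all `n ≥ 0`. -/
theorem Qn_rebase_surjective {S E S' E' : Type}
    (A : AsyncSystem S E) (A' : AsyncSystem S' E') (σ : S → S') (η : E → E')
    (hopen : IsOpenMorphism A A' σ η) (s : S) (hs : A.Reachable s) (n : ℕ) :
    Set.SurjOn (fun p : S × (Fin n → E) => (σ p.1, fun i => η (p.2 i)))
      (Qn (A.rebase s) n) (Qn (A'.rebase (σ s)) n) := by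
  rintro ⟨t', f'⟩ ⟨hreach', ⟨v', hexec'⟩, hindep'⟩
  obtain ⟨t, hreach, rfl⟩ := hopen.exists_lift_reflTransGen hreach'
  obtain ⟨w, v, hexec, hmap, -⟩ := hopen.exists_lift_exec ((A'.exec_rebase (σ s)).mp hexec')
  obtain ⟨f, rfl, rfl⟩ := List.exists_ofFn_eq_of_map_eq_ofFn hmap
  have hpw : (List.ofFn f).Pairwise A.indep :=
    hopen.pairwise_indep_of_exec (hs.trans hreach) hexec
      (by rwa [hmap, List.pairwise_ofFn])
  exact ⟨(t, f), ⟨hreach, ⟨v, (A.exec_rebase s).mpr hexec⟩, List.pairwise_ofFn.mp hpw⟩, rfl⟩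
end
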